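/- First variation of arc length in an Alexandrov space with two variable endpoints: let γ₁, γ₂ be unit-speed geodesics starting at p and q respectively, σ₀ a shortest path from p to q which is a limit of shortest paths σ_{t_i} from γ₁(t_i) to γ₂(t_i) with t_i → 0⁺, and ℓ(t) = d(γ₁(t), γ₂(t)). Then lim_{i→∞} (ℓ(t_i) − ℓ(0))/t_i = −cos α₁ − cos α₂, where α_i is the angle made by σ₀ with γ_i. -/

import Mathlib

/-! Upper bound: compare `ℓ(t)` with the broken path `γ₁ t → σ₀ c → σ₀ (1 - c) → γ₂ t`, whose
two short legs are estimated by the Euclidean law of cosines in the comparison triangles at `p`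
and `q`; as `c, t → 0` the comparison angles tend to `α₁, α₂`.

Lower bound: the same estimate with the roles exchanged, applied to `σ_t` and the points `p, q`,
bounds `ℓ(0) - ℓ(t)` by the cosines of the comparison angles at `γ₁ t` between `σ_t c` and `p`.
Since `γ₁ t` lies on the geodesic from `p` to `γ₁ c`, curvature `≥ 0` makes this angle at most
`π` minus the comparison angle between `σ_t c` and `γ₁ c`, and the latter converges to the
comparison angle of `σ₀ c` and `γ₁ c` at `p` as `t → 0`; letting `c → 0` gives `α₁`. -/

open Real Filter Topology

/-- The cosine of the Euclidean comparison angle at `a` of the triangle `(a,b,c)`. -/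
noncomputable def compCos {X : Type*} [MetricSpace X] (a b c : X) : ℝ :=
  (dist a b ^ 2 + dist a c ^ 2 - dist b c ^ 2) / (2 * dist a b * dist a c)

/-- The Euclidean comparison angle at `a` of the triangle `(a,b,c)`. -/
noncomputable def compAngle {X : Type*} [MetricSpace X] (a b c : X) : ℝ :=
  Real.arccos (compCos a b c)

/-- The (1+3)-point comparison condition characterizing Alexandrov spaces of
curvature bounded below (by `0`): around any point the three comparison angles
formed by any three other points sum to at most `2π`. -/
def AlexandrovCurvNonneg (X : Type*) [MetricSpace X] : Prop :=
  ∀ a b c d : X, a ≠ b → a ≠ c → a ≠ d →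
    compAngle a b c + compAngle a c d + compAngle a d b ≤ 2 * π

section CompCos

variable {X : Type*} [MetricSpace X] {a b c d : X}

lemma compCos_comm (a b c : X) : compCos a b c = compCos a c b := by
  unfold compCos
  rw [dist_comm b c]
  ring

lemma compCos_mem_Icc (hab : a ≠ b) (hac : a ≠ c) : compCos a b c ∈ Set.Icc (-1 : ℝ) 1 := by
  have hx : 0 < dist a b := dist_pos.2 hab
  have hy : 0 < dist a c := dist_pos.2 hac
  have h₁ : dist b c ≤ dist a b + dist a c := dist_triangle_left b c a
  have h₂ : dist a c ≤ dist a b + dist b c := dist_triangle a b c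
  have h₃ : dist a b ≤ dist a c + dist b c := dist_triangle_right a b c
  have hz : 0 ≤ dist b c := dist_nonneg
  unfold compCos
  constructor
  · rw [le_div_iff₀ (by positivity)]
    nlinarith
  · rw [div_le_one (by positivity)]
    nlinarith

lemma cos_compAngle (hab : a ≠ b) (hac : a ≠ c) : cos (compAngle a b c) = compCos a b c :=
  cos_arccos (compCos_mem_Icc hab hac).1 (compCos_mem_Icc hab hac).2

lemma compCos_eq_neg_one (hab : a ≠ b) (hac : a ≠ c) (h : dist b c = dist a b + dist a c) :
    compCos a b c = -1 := by
  have hx : 0 < dist a b := dist_pos.2 hab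
  have hy : 0 < dist a c := dist_pos.2 hac
  rw [compCos, h, div_eq_iff (by positivity)]
  ring

/-- The law of cosines with the square root expanded to first order: with `r = dist a b`,
`t = dist a c` and `C = compCos a b c`, `(r - t C + t² / 2r)² = dist b c ² + (t C - t² / 2r)²`. -/
lemma dist_le_sub_mul_compCos_add (hab : a ≠ b) (hac : a ≠ c) :
    dist b c ≤ dist a b - dist a c * compCos a b c + dist a c ^ 2 / (2 * dist a b) := by
  have hr : 0 < dist a b := dist_pos.2 hab
  have ht : 0 < dist a c := dist_pos.2 hac
  have hC1 := compCos_mem_Icc hab hac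
  have hlaw : dist b c ^ 2 =
      dist a b ^ 2 + dist a c ^ 2 - 2 * dist a b * dist a c * compCos a b c := by
    rw [compCos]
    field_simp
    ring
  have hu : 2 * dist a b * (dist a c ^ 2 / (2 * dist a b)) = dist a c ^ 2 := by field_simp
  set r := dist a b
  set t := dist a c
  set C := compCos a b c
  set u := t ^ 2 / (2 * r)
  have hrhs : 0 ≤ r - t * C + u := by nlinarith [hC1.2]
  have hsq : dist b c ^ 2 ≤ (r - t * C + u) ^ 2 := by nlinarith [sq_nonneg (t * C - u)]
  exact abs_le_of_sq_le_sq' hsq hrhs |>.2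

lemma Filter.Tendsto.compCos {ι : Type*} {l : Filter ι} {a b c : ι → X} {a₀ b₀ c₀ : X}
    (ha : Tendsto a l (𝓝 a₀)) (hb : Tendsto b l (𝓝 b₀)) (hc : Tendsto c l (𝓝 c₀))
    (hab : a₀ ≠ b₀) (hac : a₀ ≠ c₀) :
    Tendsto (fun i => compCos (a i) (b i) (c i)) l (𝓝 (compCos a₀ b₀ c₀)) := by
  have h₁ : 0 < dist a₀ b₀ := dist_pos.2 hab
  have h₂ : 0 < dist a₀ c₀ := dist_pos.2 hac
  refine Tendsto.div ?_ ((tendsto_const_nhds.mul (ha.dist hb)).mul (ha.dist hc)) (by positivity)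
  exact (((ha.dist hb).pow 2).add ((ha.dist hc).pow 2)).sub ((hb.dist hc).pow 2)

/-- The comparison angle at `a` between `b` and `d` is straight, so the (1+3)-point condition
leaves at most `π` for the comparison angles from `c` to `b` and to `d`. -/
lemma AlexandrovCurvNonneg.compCos_add_compCos_nonneg (hX : AlexandrovCurvNonneg X)
    (hab : a ≠ b) (hac : a ≠ c) (had : a ≠ d) (hbd : dist b a + dist a d = dist b d) :
    0 ≤ compCos a b c + compCos a c d := by
  have hπ : compAngle a d b = π := by
    rw [compAngle, compCos_eq_neg_one had hab (by rw [dist_comm d b, ← hbd, dist_comm b a]; ring),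
      arccos_neg_one]
  have hsum := hX a b c d hab hac had
  rw [hπ] at hsum
  have hb : 0 ≤ compAngle a b c := arccos_nonneg _
  have hd : 0 ≤ compAngle a c d := arccos_nonneg _
  have hcos := cos_le_cos_of_nonneg_of_le_pi hb (by linarith : π - compAngle a c d ≤ π)
    (by linarith : compAngle a b c ≤ π - compAngle a c d)
  rw [cos_pi_sub, cos_compAngle hab hac, cos_compAngle hac had] at hcos
  linarith

end CompCos

section ShortestPath

variable {X : Type*} [MetricSpace X]

structure IsShortestPath (σ : ℝ → X) (x y : X) : Prop where
  source : σ 0 = x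
  target : σ 1 = y
  dist_eq : ∀ u ∈ Set.Icc (0 : ℝ) 1, ∀ w ∈ Set.Icc (0 : ℝ) 1, dist (σ u) (σ w) = dist x y * |u - w|

namespace IsShortestPath

variable {σ : ℝ → X} {x y : X} {c : ℝ}

lemma dist_source_apply (h : IsShortestPath σ x y) (hc : c ∈ Set.Icc (0 : ℝ) 1) :
    dist x (σ c) = dist x y * c := by
  have h0c := h.dist_eq 0 ⟨le_rfl, zero_le_one⟩ c hc
  rwa [h.source, zero_sub, abs_neg, abs_of_nonneg hc.1] at h0c

lemma dist_target_apply_one_sub (h : IsShortestPath σ x y) (hc : c ∈ Set.Icc (0 : ℝ) 1) :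
    dist y (σ (1 - c)) = dist x y * c := by
  have h1c := h.dist_eq 1 ⟨zero_le_one, le_rfl⟩ (1 - c) ⟨by linarith [hc.2], by linarith [hc.1]⟩
  rwa [h.target, sub_sub_cancel, abs_of_nonneg hc.1] at h1c

lemma dist_apply_apply_one_sub (h : IsShortestPath σ x y) (hc0 : 0 ≤ c) (hc2 : c ≤ 1 / 2) :
    dist (σ c) (σ (1 - c)) = dist x y * (1 - 2 * c) := by
  rw [h.dist_eq c ⟨hc0, by linarith⟩ (1 - c) ⟨by linarith, by linarith⟩,
    show c - (1 - c) = -(1 - 2 * c) by ring, abs_neg, abs_of_nonneg (by linarith)]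

lemma of_tendsto {ι : Type*} {l : Filter ι} [l.NeBot] {τ : ι → ℝ → X} {x y : ι → X}
    {σ₀ : ℝ → X} {p q : X} (hτ : ∀ i, IsShortestPath (τ i) (x i) (y i))
    (hx : Tendsto x l (𝓝 p)) (hy : Tendsto y l (𝓝 q))
    (hlim : ∀ u ∈ Set.Icc (0 : ℝ) 1, Tendsto (fun i => τ i u) l (𝓝 (σ₀ u))) :
    IsShortestPath σ₀ p q where
  source := tendsto_nhds_unique (hlim 0 ⟨le_rfl, zero_le_one⟩)
    (hx.congr fun i => (hτ i).source.symm)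
  target := tendsto_nhds_unique (hlim 1 ⟨zero_le_one, le_rfl⟩)
    (hy.congr fun i => (hτ i).target.symm)
  dist_eq u hu w hw := tendsto_nhds_unique ((hlim u hu).dist (hlim w hw))
    (((hx.dist hy).mul_const _).congr fun i => ((hτ i).dist_eq u hu w hw).symm)

lemma dist_sub_dist_div_le (h : IsShortestPath σ x y) (hxy : x ≠ y) (hc0 : 0 < c)
    (hc2 : c ≤ 1 / 2) {x' y' : X} {t : ℝ} (ht : 0 < t) (hx' : dist x x' = t)
    (hy' : dist y y' = t) :
    (dist x' y' - dist x y) / t ≤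
      -compCos x (σ c) x' - compCos y (σ (1 - c)) y' + t / (dist x y * c) := by
  have hc1 : c ∈ Set.Icc (0 : ℝ) 1 := ⟨hc0.le, by linarith⟩
  have hℓ : 0 < dist x y := dist_pos.2 hxy
  have hxc := h.dist_source_apply hc1
  have hyc := h.dist_target_apply_one_sub hc1
  have hxσ : x ≠ σ c := dist_pos.1 (by rw [hxc]; positivity)
  have hyσ : y ≠ σ (1 - c) := dist_pos.1 (by rw [hyc]; positivity)
  have hxx' : x ≠ x' := dist_pos.1 (by rw [hx']; exact ht)
  have hyy' : y ≠ y' := dist_pos.1 (by rw [hy']; exact ht)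
  have hleg₁ := dist_le_sub_mul_compCos_add hxσ hxx'
  have hleg₂ := dist_le_sub_mul_compCos_add hyσ hyy'
  rw [hxc, hx'] at hleg₁
  rw [hyc, hy'] at hleg₂
  have hbroken := dist_triangle4 x' (σ c) (σ (1 - c)) y'
  rw [dist_comm x' (σ c), h.dist_apply_apply_one_sub hc0.le hc2] at hbroken
  have herr : t / (dist x y * c) * t = t ^ 2 / (2 * (dist x y * c)) * 2 := by
    field_simp
  rw [div_le_iff₀ ht]
  nlinarith

end IsShortestPath

lemma AlexandrovCurvNonneg.dist_sub_dist_div_le (hX : AlexandrovCurvNonneg X) {τ : ℝ → X}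
    {x y p q x' y' : X} {c t : ℝ} (hτ : IsShortestPath τ x y) (hxy : x ≠ y) (hc0 : 0 < c)
    (hc2 : c ≤ 1 / 2) (ht : 0 < t) (hxp : dist x p = t) (hyq : dist y q = t)
    (hxx' : x ≠ x') (hyy' : y ≠ y') (hpx' : dist p x + dist x x' = dist p x')
    (hqy' : dist q y + dist y y' = dist q y') :
    (dist p q - dist x y) / t ≤
      compCos x (τ c) x' + compCos y (τ (1 - c)) y' + t / (dist x y * c) := by
  have hc1 : c ∈ Set.Icc (0 : ℝ) 1 := ⟨hc0.le, by linarith⟩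
  have hℓ : 0 < dist x y := dist_pos.2 hxy
  have hxτ : x ≠ τ c := dist_pos.1 (by rw [hτ.dist_source_apply hc1]; positivity)
  have hyτ : y ≠ τ (1 - c) := dist_pos.1 (by rw [hτ.dist_target_apply_one_sub hc1]; positivity)
  have hxp' : x ≠ p := dist_pos.1 (by rw [hxp]; exact ht)
  have hyq' : y ≠ q := dist_pos.1 (by rw [hyq]; exact ht)
  have hvar := hτ.dist_sub_dist_div_le hxy hc0 hc2 ht hxp hyq
  have h₁ := hX.compCos_add_compCos_nonneg hxp' hxτ hxx' hpx'
  have h₂ := hX.compCos_add_compCos_nonneg hyq' hyτ hyy' hqy'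
  rw [compCos_comm x p] at h₁
  rw [compCos_comm y q] at h₂
  linarith

end ShortestPath

section FirstVariation

variable {X : Type*} [MetricSpace X] {T : ℝ} {γ γ₁ γ₂ : ℝ → X} {p q : X} {σ₀ : ℝ → X}
  {α₁ α₂ : ℝ}

lemma dist_eq_sub_of_forall_dist_eq_abs
    (hγ : ∀ s ∈ Set.Icc (0 : ℝ) T, ∀ t ∈ Set.Icc (0 : ℝ) T, dist (γ s) (γ t) = |s - t|)
    {s t : ℝ} (hs : 0 ≤ s) (hst : s ≤ t) (ht : t ≤ T) : dist (γ s) (γ t) = t - s := by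
  rw [hγ s ⟨hs, hst.trans ht⟩ t ⟨hs.trans hst, ht⟩, abs_sub_comm, abs_of_nonneg (by linarith)]

lemma tendsto_apply_of_forall_dist_eq_abs
    (hγ : ∀ s ∈ Set.Icc (0 : ℝ) T, ∀ t ∈ Set.Icc (0 : ℝ) T, dist (γ s) (γ t) = |s - t|)
    (hT : 0 < T) {ι : Type*} {l : Filter ι} {ti : ι → ℝ} (hti : Tendsto ti l (𝓝[>] 0)) :
    Tendsto (fun i => γ (ti i)) l (𝓝 (γ 0)) := by
  rw [tendsto_iff_dist_tendsto_zero]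
  refine (tendsto_nhds_of_tendsto_nhdsWithin hti).congr' ?_
  filter_upwards [hti.eventually (Ioc_mem_nhdsGT hT)] with i ⟨hi0, hiT⟩
  rw [dist_comm, dist_eq_sub_of_forall_dist_eq_abs hγ le_rfl hi0.le hiT, sub_zero]

lemma eventually_dist_sub_dist_div_lt (hT : 0 < T) (hpq : p ≠ q)
    (hγ₁0 : γ₁ 0 = p) (hγ₂0 : γ₂ 0 = q)
    (hγ₁ : ∀ s ∈ Set.Icc (0 : ℝ) T, ∀ t ∈ Set.Icc (0 : ℝ) T, dist (γ₁ s) (γ₁ t) = |s - t|)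
    (hγ₂ : ∀ s ∈ Set.Icc (0 : ℝ) T, ∀ t ∈ Set.Icc (0 : ℝ) T, dist (γ₂ s) (γ₂ t) = |s - t|)
    (hσ₀ : IsShortestPath σ₀ p q)
    (hα₁ : Tendsto (fun su : ℝ × ℝ => compAngle p (σ₀ su.1) (γ₁ su.2))
      ((𝓝[>] (0 : ℝ)) ×ˢ (𝓝[>] (0 : ℝ))) (𝓝 α₁))
    (hα₂ : Tendsto (fun su : ℝ × ℝ => compAngle q (σ₀ (1 - su.1)) (γ₂ su.2))
      ((𝓝[>] (0 : ℝ)) ×ˢ (𝓝[>] (0 : ℝ))) (𝓝 α₂))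
    {b : ℝ} (hb : -cos α₁ - cos α₂ < b) :
    ∀ᶠ t in 𝓝[>] 0, (dist (γ₁ t) (γ₂ t) - dist p q) / t < b := by
  obtain ⟨b', hb', hb'b⟩ := exists_between hb
  have hθ : ∀ᶠ su : ℝ × ℝ in (𝓝[>] (0 : ℝ)) ×ˢ (𝓝[>] (0 : ℝ)),
      -cos (compAngle p (σ₀ su.1) (γ₁ su.2)) - cos (compAngle q (σ₀ (1 - su.1)) (γ₂ su.2)) < b' :=
    (((continuous_cos.tendsto _).comp hα₁).neg.sub ((continuous_cos.tendsto _).comp hα₂)).eventually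
      (gt_mem_nhds hb')
  obtain ⟨c, hθc, hc0, hc2⟩ :=
    (hθ.curry.and (Ioc_mem_nhdsGT (by norm_num : (0 : ℝ) < 1 / 2))).exists
  have hpσ : p ≠ σ₀ c := dist_pos.1 (by
    rw [hσ₀.dist_source_apply ⟨hc0.le, by linarith⟩]; exact mul_pos (dist_pos.2 hpq) hc0)
  have hqσ : q ≠ σ₀ (1 - c) := dist_pos.1 (by
    rw [hσ₀.dist_target_apply_one_sub ⟨hc0.le, by linarith⟩]; exact mul_pos (dist_pos.2 hpq) hc0)
  have herr : Tendsto (fun t : ℝ => t / (dist p q * c)) (𝓝[>] 0) (𝓝 0) :=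
    ((continuous_id.div_const _).tendsto' 0 0 (zero_div _)).mono_left nhdsWithin_le_nhds
  filter_upwards [hθc, Ioc_mem_nhdsGT hT, herr.eventually (gt_mem_nhds (sub_pos.2 hb'b))]
    with t hθt ⟨ht0, htT⟩ herrt
  have hpt : dist p (γ₁ t) = t := by
    rw [← hγ₁0, dist_eq_sub_of_forall_dist_eq_abs hγ₁ le_rfl ht0.le htT, sub_zero]
  have hqt : dist q (γ₂ t) = t := by
    rw [← hγ₂0, dist_eq_sub_of_forall_dist_eq_abs hγ₂ le_rfl ht0.le htT, sub_zero]
  have hvar := hσ₀.dist_sub_dist_div_le hpq hc0 hc2 ht0 hpt hqt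
  rw [← cos_compAngle hpσ (dist_pos.1 (by rw [hpt]; exact ht0)),
    ← cos_compAngle hqσ (dist_pos.1 (by rw [hqt]; exact ht0))] at hvar
  linarith

lemma AlexandrovCurvNonneg.eventually_lt_dist_sub_dist_div (hX : AlexandrovCurvNonneg X)
    (hT : 0 < T) (hpq : p ≠ q) (hγ₁0 : γ₁ 0 = p) (hγ₂0 : γ₂ 0 = q)
    (hγ₁ : ∀ s ∈ Set.Icc (0 : ℝ) T, ∀ t ∈ Set.Icc (0 : ℝ) T, dist (γ₁ s) (γ₁ t) = |s - t|)
    (hγ₂ : ∀ s ∈ Set.Icc (0 : ℝ) T, ∀ t ∈ Set.Icc (0 : ℝ) T, dist (γ₂ s) (γ₂ t) = |s - t|)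
    {ι : Type*} {l : Filter ι} {ti : ι → ℝ} {τ : ι → ℝ → X}
    (hti : Tendsto ti l (𝓝[>] 0)) (hτ : ∀ i, IsShortestPath (τ i) (γ₁ (ti i)) (γ₂ (ti i)))
    (hτσ₀ : ∀ u ∈ Set.Icc (0 : ℝ) 1, Tendsto (fun i => τ i u) l (𝓝 (σ₀ u)))
    (hσ₀ : IsShortestPath σ₀ p q)
    (hα₁ : Tendsto (fun su : ℝ × ℝ => compAngle p (σ₀ su.1) (γ₁ su.2))
      ((𝓝[>] (0 : ℝ)) ×ˢ (𝓝[>] (0 : ℝ))) (𝓝 α₁))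
    (hα₂ : Tendsto (fun su : ℝ × ℝ => compAngle q (σ₀ (1 - su.1)) (γ₂ su.2))
      ((𝓝[>] (0 : ℝ)) ×ˢ (𝓝[>] (0 : ℝ))) (𝓝 α₂))
    {a : ℝ} (ha : a < -cos α₁ - cos α₂) :
    ∀ᶠ i in l, a < (dist (γ₁ (ti i)) (γ₂ (ti i)) - dist p q) / ti i := by
  have hd₁ := @dist_eq_sub_of_forall_dist_eq_abs _ _ _ _ hγ₁
  have hd₂ := @dist_eq_sub_of_forall_dist_eq_abs _ _ _ _ hγ₂
  have hℓ : 0 < dist p q := dist_pos.2 hpq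
  have hdiag : ∀ᶠ c in 𝓝[>] (0 : ℝ),
      cos (compAngle p (σ₀ c) (γ₁ c)) + cos (compAngle q (σ₀ (1 - c)) (γ₂ c)) < -a :=
    ((((continuous_cos.tendsto _).comp hα₁).add ((continuous_cos.tendsto _).comp hα₂)).comp
      tendsto_diag).eventually (gt_mem_nhds (by linarith))
  obtain ⟨c, hθc, hc0, hc⟩ := (hdiag.and (Ioc_mem_nhdsGT (lt_min one_half_pos hT))).exists
  obtain ⟨hc2, hcT⟩ := le_min_iff.1 hc
  have hc1 : c ∈ Set.Icc (0 : ℝ) 1 := ⟨hc0.le, by linarith⟩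
  have hpc : dist p (γ₁ c) = c := by rw [← hγ₁0, hd₁ le_rfl hc0.le hcT, sub_zero]
  have hqc : dist q (γ₂ c) = c := by rw [← hγ₂0, hd₂ le_rfl hc0.le hcT, sub_zero]
  have hpσ : p ≠ σ₀ c := dist_pos.1 (by rw [hσ₀.dist_source_apply hc1]; positivity)
  have hqσ : q ≠ σ₀ (1 - c) := dist_pos.1 (by rw [hσ₀.dist_target_apply_one_sub hc1]; positivity)
  have hpγ : p ≠ γ₁ c := dist_pos.1 (by rw [hpc]; exact hc0)
  have hqγ : q ≠ γ₂ c := dist_pos.1 (by rw [hqc]; exact hc0)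
  rw [cos_compAngle hpσ hpγ, cos_compAngle hqσ hqγ] at hθc
  have hγ₁lim := hγ₁0 ▸ tendsto_apply_of_forall_dist_eq_abs hγ₁ hT hti
  have hγ₂lim := hγ₂0 ▸ tendsto_apply_of_forall_dist_eq_abs hγ₂ hT hti
  have hℓlim := hγ₁lim.dist hγ₂lim
  have hbound : Tendsto (fun i => compCos (γ₁ (ti i)) (τ i c) (γ₁ c)
      + compCos (γ₂ (ti i)) (τ i (1 - c)) (γ₂ c) + ti i / (dist (γ₁ (ti i)) (γ₂ (ti i)) * c)) l
      (𝓝 (compCos p (σ₀ c) (γ₁ c) + compCos q (σ₀ (1 - c)) (γ₂ c) + 0 / (dist p q * c))) :=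
    ((hγ₁lim.compCos (hτσ₀ c hc1) tendsto_const_nhds hpσ hpγ).add
      (hγ₂lim.compCos (hτσ₀ (1 - c) ⟨by linarith, by linarith⟩) tendsto_const_nhds hqσ hqγ)).add
      ((tendsto_nhds_of_tendsto_nhdsWithin hti).div (hℓlim.mul_const c) (by positivity))
  rw [zero_div, add_zero] at hbound
  filter_upwards [hbound.eventually (gt_mem_nhds hθc), hti.eventually (Ioo_mem_nhdsGT hc0),
    hℓlim.eventually (lt_mem_nhds hℓ)] with i hbi ⟨ht0, htc⟩ hℓi
  have hγ₁t : dist p (γ₁ (ti i)) = ti i := by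
    rw [← hγ₁0, hd₁ le_rfl ht0.le (htc.le.trans hcT), sub_zero]
  have hγ₂t : dist q (γ₂ (ti i)) = ti i := by
    rw [← hγ₂0, hd₂ le_rfl ht0.le (htc.le.trans hcT), sub_zero]
  have hγ₁tc := hd₁ ht0.le htc.le hcT
  have hγ₂tc := hd₂ ht0.le htc.le hcT
  have hvar := hX.dist_sub_dist_div_le (hτ i) (dist_pos.1 hℓi) hc0 hc2 ht0
    (by rw [dist_comm, hγ₁t]) (by rw [dist_comm, hγ₂t])
    (dist_pos.1 (by rw [hγ₁tc]; linarith)) (dist_pos.1 (by rw [hγ₂tc]; linarith))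
    (by rw [hγ₁t, hγ₁tc, hpc]; ring) (by rw [hγ₂t, hγ₂tc, hqc]; ring)
  have hneg : (dist p q - dist (γ₁ (ti i)) (γ₂ (ti i))) / ti i
      = -((dist (γ₁ (ti i)) (γ₂ (ti i)) - dist p q) / ti i) := by ring
  linarith

end FirstVariation

/-- first variation of arc length with two variable endpoints in an
Alexandrov space.  Let `γ₁, γ₂ : [0,T] → X` be unit-speed geodesics starting at
`p` and `q`, for each `t` let `σ t : [0,1] → X` be a shortest path from `γ₁ t`
to `γ₂ t`, and suppose `σ (tᵢ) → σ₀` (pointwise) along a sequence `tᵢ → 0⁺`.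
If `αᵢ` is the angle made by `σ₀` with `γᵢ` (realized as the limit of the
comparison angles), then `(ℓ(tᵢ) − ℓ(0))/tᵢ → −cos α₁ − cos α₂` where
`ℓ(t) = d(γ₁ t, γ₂ t)`. -/
theorem first_variation_two_endpoints
    {X : Type*} [MetricSpace X] (hX : AlexandrovCurvNonneg X)
    (T : ℝ) (hT : 0 < T) (γ₁ γ₂ : ℝ → X) (p q : X) (hpq : p ≠ q)
    (hγ₁0 : γ₁ 0 = p) (hγ₂0 : γ₂ 0 = q)
    (hγ₁ : ∀ s ∈ Set.Icc (0:ℝ) T, ∀ t ∈ Set.Icc (0:ℝ) T,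
      dist (γ₁ s) (γ₁ t) = |s - t|)
    (hγ₂ : ∀ s ∈ Set.Icc (0:ℝ) T, ∀ t ∈ Set.Icc (0:ℝ) T,
      dist (γ₂ s) (γ₂ t) = |s - t|)
    (σ : ℝ → ℝ → X) (σ₀ : ℝ → X)
    (hσ_src : ∀ t ∈ Set.Icc (0:ℝ) T, σ t 0 = γ₁ t)
    (hσ_tgt : ∀ t ∈ Set.Icc (0:ℝ) T, σ t 1 = γ₂ t)
    (hσ_min : ∀ t ∈ Set.Icc (0:ℝ) T, ∀ u ∈ Set.Icc (0:ℝ) 1, ∀ w ∈ Set.Icc (0:ℝ) 1,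
      dist (σ t u) (σ t w) = dist (γ₁ t) (γ₂ t) * |u - w|)
    (ti : ℕ → ℝ) (hti_pos : ∀ i, 0 < ti i) (hti_le : ∀ i, ti i ≤ T)
    (hti_lim : Tendsto ti atTop (𝓝 0))
    (hσ_lim : ∀ u ∈ Set.Icc (0:ℝ) 1, Tendsto (fun i => σ (ti i) u) atTop (𝓝 (σ₀ u)))
    (α₁ α₂ : ℝ)
    (hα₁ : Tendsto (fun su : ℝ × ℝ => compAngle p (σ₀ su.1) (γ₁ su.2))
      ((𝓝[>] (0:ℝ)) ×ˢ (𝓝[>] (0:ℝ))) (𝓝 α₁))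
    (hα₂ : Tendsto (fun su : ℝ × ℝ => compAngle q (σ₀ (1 - su.1)) (γ₂ su.2))
      ((𝓝[>] (0:ℝ)) ×ˢ (𝓝[>] (0:ℝ))) (𝓝 α₂)) :
    Tendsto (fun i => (dist (γ₁ (ti i)) (γ₂ (ti i)) - dist p q) / ti i)
      atTop (𝓝 (-Real.cos α₁ - Real.cos α₂)) := by
  have hti : Tendsto ti atTop (𝓝[>] 0) :=
    tendsto_nhdsWithin_iff.2 ⟨hti_lim, .of_forall hti_pos⟩
  have hσ : ∀ i, IsShortestPath (σ (ti i)) (γ₁ (ti i)) (γ₂ (ti i)) := fun i =>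
    have hi : ti i ∈ Set.Icc (0 : ℝ) T := ⟨(hti_pos i).le, hti_le i⟩
    ⟨hσ_src _ hi, hσ_tgt _ hi, hσ_min _ hi⟩
  have hσ₀ : IsShortestPath σ₀ p q := IsShortestPath.of_tendsto hσ
    (hγ₁0 ▸ tendsto_apply_of_forall_dist_eq_abs hγ₁ hT hti)
    (hγ₂0 ▸ tendsto_apply_of_forall_dist_eq_abs hγ₂ hT hti) hσ_lim
  refine tendsto_order.2 ⟨fun a ha => ?_, fun b hb => ?_⟩
  · exact hX.eventually_lt_dist_sub_dist_div hT hpq hγ₁0 hγ₂0 hγ₁ hγ₂ hti hσ hσ_lim hσ₀ hα₁ hα₂ ha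
  · exact hti.eventually (eventually_dist_sub_dist_div_lt hT hpq hγ₁0 hγ₂0 hγ₁ hγ₂ hσ₀ hα₁ hα₂ hb)
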